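/- Let d ≥ 1 and let L = {L_i}_{i=1}^{d²} be a measure basis for d×d complex matrices with all weights l_i = tr L_i strictly positive, Gram matrix G, bias matrix A = diag(l_i), and √Φ := A^{1/2}(A^{1/2}G^{-1}A^{1/2})^{1/2}A^{-1/2}. Then: (i) √Φ is column quasistochastic, i.e. every column of √Φ sums to 1; (ii) the weight vector (l_1,…,l_{d²}) is a right eigenvector of √Φ with eigenvalue 1; and consequently (iii) √Φ·AJ = AJ·√Φ = AJ, where J is the d²×d² all-ones matrix. -/

import Mathlib

open Matrix BigOperators
open scoped ComplexOrder Kronecker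

/-- A measure basis: a linearly independent family of `d²` Hermitian `d×d` complex
matrices summing to the identity, with nonnegative traces. -/
def IsMeasureBasis {d : ℕ} (L : Fin (d ^ 2) → Matrix (Fin d) (Fin d) ℂ) : Prop :=
  (∀ i, (L i).IsHermitian) ∧ LinearIndependent ℝ L ∧ (∑ i, L i) = 1 ∧ ∀ i, 0 ≤ ((L i).trace).re

/-- A Wigner basis: an orthogonal measure basis. -/
def IsWignerBasis {d : ℕ} (L : Fin (d ^ 2) → Matrix (Fin d) (Fin d) ℂ) : Prop :=
  IsMeasureBasis L ∧ ∀ i j, i ≠ j → (L i * L j).trace = 0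

/-- The rescaled frame operator `S_L(X) = ∑ⱼ (tr(X Lⱼ)/lⱼ) Lⱼ`. -/
noncomputable def rsFrameOp {n : Type*} [Fintype n] {m : Type*} [Fintype m] [DecidableEq m]
    (L : n → Matrix m m ℂ) (X : Matrix m m ℂ) : Matrix m m ℂ :=
  ∑ j, (((X * L j).trace) / ((L j).trace)) • L j

/-- A map on matrices that is ℝ-linear, Hermiticity-preserving, self-adjoint with respect to
the Hilbert–Schmidt inner product on Hermitian matrices, and positive. -/
def IsPosSelfAdjMap {m : Type*} [Fintype m]
    (T : Matrix m m ℂ → Matrix m m ℂ) : Prop :=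
  IsLinearMap ℝ T ∧ (∀ X, X.IsHermitian → (T X).IsHermitian) ∧
  (∀ X Y, X.IsHermitian → Y.IsHermitian → (T X * Y).trace = (X * T Y).trace) ∧
  (∀ X, X.IsHermitian → 0 ≤ ((X * T X).trace).re)

/-- `T` is the (unique) positive self-adjoint inverse square root of the rescaled frame
operator of `L`, i.e. `S_L ∘ T ∘ T = id` on Hermitian matrices; `PW(L) i = T (L i)`. -/
def IsInvSqrtOfFrameOp {n : Type*} [Fintype n] {m : Type*} [Fintype m] [DecidableEq m]
    (L : n → Matrix m m ℂ) (T : Matrix m m ℂ → Matrix m m ℂ) : Prop :=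
  IsPosSelfAdjMap T ∧ ∀ X : Matrix m m ℂ, X.IsHermitian → rsFrameOp L (T (T X)) = X

/-! Since `∑ⱼ Lⱼ = 1`, the Gram matrix (positive definite by linear independence) sends the
all-ones vector to the weight vector `l`, so `G⁻¹ l = 1`, and therefore `u = √l` is fixed by
`B² = A^{1/2} G⁻¹ A^{1/2}`. A positive semidefinite matrix fixes every vector its square fixes,
so `B u = u`. Conjugating by `A^{1/2} = diag u` turns this into `√Φ l = l`, and, as `B` is
symmetric, into `1ᵀ √Φ = 1ᵀ`. -/

namespace Matrix

variable {ι m : Type*}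

theorem PosSemidef.mulVec_eq_self_of_mul_self_mulVec_eq_self {𝕜 : Type*} [RCLike 𝕜] [Fintype ι]
    {B : Matrix ι ι 𝕜} (hB : B.PosSemidef) {v : ι → 𝕜} (hv : (B * B) *ᵥ v = v) :
    B *ᵥ v = v := by
  set w := B *ᵥ v - v
  -- `w` is a `-1`-eigenvector of `B`, which positivity forbids unless `w = 0`
  have hBw : B *ᵥ w = -w := by
    rw [mulVec_sub, mulVec_mulVec, hv, neg_sub]
  have hw : star w ⬝ᵥ w = 0 := by
    have := hB.dotProduct_mulVec_nonneg w
    rw [hBw, dotProduct_neg, neg_nonneg] at this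
    exact le_antisymm this (dotProduct_star_self_nonneg w)
  exact sub_eq_zero.mp (dotProduct_star_self_eq_zero.mp hw)

theorem re_trace_mul_self_pos [Fintype m] {M : Matrix m m ℂ} (hM : M.IsHermitian) (h0 : M ≠ 0) :
    0 < (M * M).trace.re := by
  have hpsd : (Mᴴ * M).PosSemidef := posSemidef_conjTranspose_mul_self M
  have hne : (Mᴴ * M).trace ≠ 0 := mt trace_conjTranspose_mul_self_eq_zero_iff.mp h0
  rw [hM.eq] at hpsd hne
  exact (Complex.pos_iff.mp (hpsd.trace_nonneg.lt_of_ne hne.symm)).1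

section traceGram

variable [Fintype m]

def traceGram (L : ι → Matrix m m ℂ) : Matrix ι ι ℝ :=
  of fun i j => (L i * L j).trace.re

theorem traceGram_isHermitian (L : ι → Matrix m m ℂ) : (traceGram L).IsHermitian := by
  ext i j
  simp only [traceGram, conjTranspose_apply, of_apply, star_trivial, trace_mul_comm (L i)]

variable [Fintype ι]

theorem dotProduct_traceGram_mulVec (L : ι → Matrix m m ℂ) (x : ι → ℝ) :
    x ⬝ᵥ traceGram L *ᵥ x = ((∑ i, x i • L i) * ∑ i, x i • L i).trace.re := by
  rw [Finset.sum_mul_sum]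
  simp only [smul_mul_smul_comm, trace_sum, trace_smul, Complex.re_sum, Complex.smul_re,
    dotProduct, mulVec, traceGram, of_apply, Finset.mul_sum, smul_eq_mul]
  refine Finset.sum_congr rfl fun i _ => Finset.sum_congr rfl fun j _ => ?_
  ring

theorem posDef_traceGram {L : ι → Matrix m m ℂ} (hL : ∀ i, (L i).IsHermitian)
    (hli : LinearIndependent ℝ L) : (traceGram L).PosDef := by
  refine .of_dotProduct_mulVec_pos (traceGram_isHermitian L) fun x hx => ?_
  have hsum : (∑ i, x i • L i).IsHermitian :=
    isSelfAdjoint_sum _ fun i _ => (hL i).smul (IsSelfAdjoint.all (x i))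
  have hne : ∑ i, x i • L i ≠ 0 := fun h => hx (funext (Fintype.linearIndependent_iff.mp hli x h))
  rw [star_trivial, dotProduct_traceGram_mulVec]
  exact re_trace_mul_self_pos hsum hne

theorem traceGram_mulVec_one [DecidableEq m] {L : ι → Matrix m m ℂ} (hL : ∑ i, L i = 1) :
    traceGram L *ᵥ 1 = fun i => (L i).trace.re := by
  ext i
  simp only [mulVec, dotProduct, traceGram, of_apply, Pi.one_apply, mul_one, ← Complex.re_sum,
    ← trace_sum, ← Finset.mul_sum, hL]

end traceGram

section diagonalConj

variable {R : Type*} [Field R] [Fintype ι] [DecidableEq ι] {B : Matrix ι ι R} {u : ι → R}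

theorem mulVec_diagonal_mul_mul_diagonal_inv (hBu : B *ᵥ u = u) (hu : ∀ i, u i ≠ 0) :
    (diagonal u * B * diagonal u⁻¹) *ᵥ (u * u) = u * u := by
  have hinv : diagonal u⁻¹ *ᵥ (u * u) = u := by
    ext i; simp [mulVec_diagonal, hu i]
  rw [← mulVec_mulVec, ← mulVec_mulVec, hinv, hBu]
  ext i; simp [mulVec_diagonal]

theorem one_vecMul_diagonal_mul_mul_diagonal_inv (hB : Bᵀ = B) (hBu : B *ᵥ u = u)
    (hu : ∀ i, u i ≠ 0) : 1 ᵥ* (diagonal u * B * diagonal u⁻¹) = 1 := by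
  have huB : u ᵥ* B = u := by rw [← mulVec_transpose, hB, hBu]
  rw [← vecMul_vecMul, ← vecMul_vecMul, show 1 ᵥ* diagonal u = u by ext i; simp [vecMul_diagonal],
    huB]
  ext i; simp [vecMul_diagonal, hu i]

end diagonalConj

end Matrix

theorem sqrt_born_matrix_quasistochastic {d : ℕ}
    (L : Fin (d ^ 2) → Matrix (Fin d) (Fin d) ℂ)
    (hL : IsMeasureBasis L) (hpos : ∀ i, 0 < ((L i).trace).re)
    (G A Asq AsqInv B sqrtPhi J : Matrix (Fin (d ^ 2)) (Fin (d ^ 2)) ℝ)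
    (hG : ∀ i j, G i j = ((L i * L j).trace).re)
    (hA : A = Matrix.diagonal fun i => ((L i).trace).re)
    (hAsq : Asq = Matrix.diagonal fun i => Real.sqrt (((L i).trace).re))
    (hAsqInv : AsqInv = Matrix.diagonal fun i => (Real.sqrt (((L i).trace).re))⁻¹)
    (hBpsd : B.PosSemidef) (hBsq : B * B = Asq * G⁻¹ * Asq)
    (hsqrtPhi : sqrtPhi = Asq * B * AsqInv)
    (hJ : J = Matrix.of fun _ _ => (1 : ℝ)) :
    (∀ j, ∑ i, sqrtPhi i j = 1) ∧
    (sqrtPhi *ᵥ (fun i => ((L i).trace).re) = fun i => ((L i).trace).re) ∧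
    sqrtPhi * (A * J) = A * J ∧ (A * J) * sqrtPhi = A * J := by
  obtain ⟨hHerm, hli, hsum, -⟩ := hL
  set l : Fin (d ^ 2) → ℝ := fun i => ((L i).trace).re
  set u : Fin (d ^ 2) → ℝ := fun i => Real.sqrt (l i)
  have hu : ∀ i, u i ≠ 0 := fun i => (Real.sqrt_pos.mpr (hpos i)).ne'
  have hl : l = u * u := funext fun i => (Real.mul_self_sqrt (hpos i).le).symm
  have hGl : G⁻¹ *ᵥ l = 1 := by
    obtain rfl : G = traceGram L := Matrix.ext hG
    have := (posDef_traceGram hHerm hli).isUnit.invertible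
    exact inv_mulVec_eq_vec (traceGram_mulVec_one hsum).symm
  have hBu : B *ᵥ u = u := by
    refine hBpsd.mulVec_eq_self_of_mul_self_mulVec_eq_self ?_
    have hdiag (w) : diagonal u *ᵥ w = u * w := funext (mulVec_diagonal u w)
    rw [hBsq, hAsq, ← mulVec_mulVec, ← mulVec_mulVec, hdiag u, ← hl, hGl, hdiag, mul_one]
  have hright : sqrtPhi *ᵥ l = l := by
    rw [hsqrtPhi, hAsq, hAsqInv, hl]
    exact mulVec_diagonal_mul_mul_diagonal_inv hBu hu
  have hcol : 1 ᵥ* sqrtPhi = 1 := by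
    rw [hsqrtPhi, hAsq, hAsqInv]
    exact one_vecMul_diagonal_mul_mul_diagonal_inv hBpsd.1 hBu hu
  have hAJ : A * J = vecMulVec l 1 := by
    ext i j
    simp [hA, hJ, vecMulVec]
  refine ⟨fun j => by simpa [vecMul, dotProduct] using congrFun hcol j, hright, ?_, ?_⟩
  · rw [hAJ, mul_vecMulVec, hright]
  · rw [hAJ, vecMulVec_mul, hcol]
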